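/- Let p be a prime with p ≥ 5. Set a = p² and b = p⁻¹ in ℚ_p. Then a·b = p, and for every nonzero u ∈ ℚ_p at least one of u^(p−1)·p² and u^(1−p)·p⁻¹ has p-adic norm strictly greater than 1 (equivalently, does not lie in ℤ_p). In other words, no pair (c,d) ∈ ℤ_p² with cd = p satisfies c = u^(p−1)·p² and d = u^(1−p)·p⁻¹ for some u ∈ ℚ_pˣ. -/

import Mathlib

/-!
With `v` the `p`-adic valuation of `u`, integrality of `u^(p-1)·p²` and `u^(1-p)·p⁻¹` means
`-2 ≤ (p-1)·v ≤ -1`; no multiple of `p - 1` lies in that range once `p - 1 > 2`.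
-/

lemma Int.mul_notMem_Icc_neg_two_neg_one {n : ℤ} (hn : 2 < n) (k : ℤ) :
    n * k ∉ Set.Icc (-2) (-1) := by
  rintro ⟨hlo, hhi⟩
  rcases le_or_gt k (-1) with hk | hk <;> nlinarith

namespace Padic

variable {p : ℕ} [Fact p.Prime]

lemma valuation_zpow_mul_p_zpow {u : ℚ_[p]} (hu : u ≠ 0) (n m : ℤ) :
    (u ^ n * (p : ℚ_[p]) ^ m).valuation = n * u.valuation + m := by
  have hp : (p : ℚ_[p]) ≠ 0 := Nat.cast_ne_zero.mpr (Fact.out : p.Prime).ne_zero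
  rw [valuation_mul (zpow_ne_zero n hu) (zpow_ne_zero m hp), valuation_zpow, valuation_zpow,
    valuation_p, mul_one]

theorem one_lt_norm_zpow_mul_p_sq_or_one_lt_norm_zpow_neg_mul_p_inv {n : ℤ} (hn : 2 < n)
    {u : ℚ_[p]} (hu : u ≠ 0) :
    1 < ‖u ^ n * (p : ℚ_[p]) ^ 2‖ ∨ 1 < ‖u ^ (-n) * (p : ℚ_[p])⁻¹‖ := by
  by_contra! ⟨hc, hd⟩
  rw [← zpow_ofNat, norm_le_one_iff_val_nonneg, valuation_zpow_mul_p_zpow hu] at hc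
  rw [← zpow_neg_one, norm_le_one_iff_val_nonneg, valuation_zpow_mul_p_zpow hu] at hd
  exact Int.mul_notMem_Icc_neg_two_neg_one hn u.valuation ⟨by linarith, by linarith⟩

end Padic

/-- **Counter-example 3.8 (explicit witness).**
Let `p ≥ 5` be a prime. Set `a = p²` and `b = p⁻¹` in `ℚ_p`. Then `a·b = p`, and for every
nonzero `u ∈ ℚ_p` at least one of `u^(p−1)·p²` and `u^(1−p)·p⁻¹` has `p`-adic norm strictly
greater than `1` (i.e. does not lie in `ℤ_p`). In other words, no pair `(c,d) ∈ ℤ_p²` with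
`c·d = p` satisfies `c = u^(p−1)·p²` and `d = u^(1−p)·p⁻¹` for some `u ∈ ℚ_pˣ`. -/
theorem oort_tate_pair_no_integral_representative
    (p : ℕ) [Fact p.Prime] (hp : 5 ≤ p) :
    ((p : ℚ_[p]) ^ 2) * ((p : ℚ_[p])⁻¹) = (p : ℚ_[p]) ∧
    (∀ u : ℚ_[p], u ≠ 0 →
      1 < ‖u ^ ((p : ℤ) - 1) * (p : ℚ_[p]) ^ 2‖ ∨
      1 < ‖u ^ ((1 : ℤ) - (p : ℤ)) * (p : ℚ_[p])⁻¹‖) ∧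
    (∀ c d : ℤ_[p], c * d = (p : ℤ_[p]) →
      ∀ u : ℚ_[p]ˣ,
        ¬((c : ℚ_[p]) = (u : ℚ_[p]) ^ ((p : ℤ) - 1) * (p : ℚ_[p]) ^ 2 ∧
          (d : ℚ_[p]) = (u : ℚ_[p]) ^ ((1 : ℤ) - (p : ℤ)) * (p : ℚ_[p])⁻¹)) := by
  have hp0 : (p : ℚ_[p]) ≠ 0 := Nat.cast_ne_zero.mpr (Fact.out : p.Prime).ne_zero
  have key : ∀ u : ℚ_[p], u ≠ 0 →
      1 < ‖u ^ ((p : ℤ) - 1) * (p : ℚ_[p]) ^ 2‖ ∨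
      1 < ‖u ^ ((1 : ℤ) - (p : ℤ)) * (p : ℚ_[p])⁻¹‖ := by
    intro u hu
    rw [show (1 : ℤ) - p = -(p - 1) by ring]
    exact Padic.one_lt_norm_zpow_mul_p_sq_or_one_lt_norm_zpow_neg_mul_p_inv (by omega) hu
  refine ⟨by rw [sq, mul_inv_cancel_right₀ hp0], key, ?_⟩
  rintro c d - u ⟨hc, hd⟩
  rcases key u u.ne_zero with h | h
  · exact (PadicInt.norm_le_one c).not_gt (by rwa [PadicInt.norm_def, hc])
  · exact (PadicInt.norm_le_one d).not_gt (by rwa [PadicInt.norm_def, hd])
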